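/- arXiv:1608.01602 — 3 statements merged into one kernel-verified Lean document; each statement's English description precedes it below -/
import Mathlib

section
/- Fix n ≥ 1 and real numbers (V_k)_{k ∈ B_n} with V_{2k} + V_{2k+1} ≠ 0 for all 0 ≤ k ≤ 2^{n−1}−1 (so that V_ff is invertible). If both H_n and (RH)_{n−1} are invertible, then U* H_n^{−1} U = [[1, 0],[−V_ff^{−1}V_ef, 1]] · [[(RH)_{n−1}^{−1}, 0],[0, V_ff^{−1}]] · [[1, −V_fe V_ff^{−1}],[0, 1]] as block operators on ℓ²(B_{n−1}) ⊕ ℓ²(B_{n−1}). -/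
open MeasureTheory ProbabilityTheory Matrix Filter Topology

noncomputable section

/-- Hierarchical (ultrametric) distance on `ℕ₀ = {0,1,2,…}`:
`d(j,k) = min {r ≥ 0 | ⌊j/2^r⌋ = ⌊k/2^r⌋}`. -/
def hdist (j k : ℕ) : ℕ := sInf {r | j / 2 ^ r = k / 2 ^ r}

lemma hdist_comm (j k : ℕ) : hdist j k = hdist k j := by
  unfold hdist; congr 1; ext r; exact eq_comm

/-- Matrix entry of the hierarchical Laplacian `Δ = ∑_{r ≥ 1} p_r E_r`,
restricted to a block `B_n` (the entry only depends on the hierarchical distance):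
`Δ(j,k) = ∑_{r ≥ max(1, d(j,k))} p_r · 2^{-r}`. -/
def lapEntry (p : ℕ → ℝ) (j k : ℕ) : ℝ :=
  ∑' r : ℕ, if 1 ≤ r ∧ hdist j k ≤ r then p r / 2 ^ r else 0

/-- Matrix entry of the truncated Laplacian `∑_{r = 1}^{m} p_r E_r`. -/
def lapEntryT (p : ℕ → ℝ) (m : ℕ) (j k : ℕ) : ℝ :=
  ∑ r ∈ Finset.Icc 1 m, if hdist j k ≤ r then p r / 2 ^ r else 0

/-- The finite-volume Hamiltonian `H_n = 1_{B_n} (Δ + V) 1_{B_n}`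
as a real symmetric `2^n × 2^n` matrix. -/
def Hmat (p : ℕ → ℝ) (v : ℕ → ℝ) (n : ℕ) : Matrix (Fin (2 ^ n)) (Fin (2 ^ n)) ℝ :=
  fun j k => lapEntry p j k + if j = k then v j else 0

/-- The truncated finite-volume Hamiltonian
`H_{n,m} = 1_{B_n} (∑_{r=1}^m p_r E_r + V) 1_{B_n}`. -/
def HmatT (p : ℕ → ℝ) (v : ℕ → ℝ) (n m : ℕ) : Matrix (Fin (2 ^ n)) (Fin (2 ^ n)) ℝ :=
  fun j k => lapEntryT p m j k + if j = k then v j else 0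

lemma Hmat_isHermitian (p : ℕ → ℝ) (v : ℕ → ℝ) (n : ℕ) : (Hmat p v n).IsHermitian := by
  refine Matrix.ext fun j k => ?_
  simp only [conjTranspose_apply, star_trivial, Hmat, lapEntry, hdist_comm (k : ℕ) (j : ℕ)]
  rcases eq_or_ne j k with h | h
  · subst h; rfl
  · simp [h, h.symm]

lemma HmatT_isHermitian (p : ℕ → ℝ) (v : ℕ → ℝ) (n m : ℕ) : (HmatT p v n m).IsHermitian := by
  refine Matrix.ext fun j k => ?_
  simp only [conjTranspose_apply, star_trivial, HmatT, lapEntryT, hdist_comm (k : ℕ) (j : ℕ)]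
  rcases eq_or_ne j k with h | h
  · subst h; rfl
  · simp [h, h.symm]

/-- The site `0 ∈ B_n`. -/
def fin0 (n : ℕ) : Fin (2 ^ n) := ⟨0, Nat.two_pow_pos n⟩

/-- `2k ∈ B_{n+1}` for `k ∈ B_n`. -/
def dblFin {n : ℕ} (k : Fin (2 ^ n)) : Fin (2 ^ (n + 1)) :=
  ⟨2 * k, by have h := k.isLt; rw [pow_succ]; omega⟩

/-- `2k + 1 ∈ B_{n+1}` for `k ∈ B_n`. -/
def dblFin1 {n : ℕ} (k : Fin (2 ^ n)) : Fin (2 ^ (n + 1)) :=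
  ⟨2 * k + 1, by have h := k.isLt; rw [pow_succ]; omega⟩

/-- Hopping sequence `(p_{r+1})_{r ≥ 1}` of the renormalized model. -/
def shiftSeq (p : ℕ → ℝ) : ℕ → ℝ := fun r => p (r + 1)

/-- The renormalized potential `(RV)_k = 2 V_{2k} V_{2k+1}/(V_{2k} + V_{2k+1}) + p_1`. -/
def renPotM (p : ℕ → ℝ) (v : ℕ → ℝ) : ℕ → ℝ :=
  fun k => 2 * v (2 * k) * v (2 * k + 1) / (v (2 * k) + v (2 * k + 1)) + p 1

/-- The renormalized potential `(RV)_k = (1/(2 V_{2k}) + 1/(2 V_{2k+1}))⁻¹ + p_1`. -/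
def renPotH (p : ℕ → ℝ) (v : ℕ → ℝ) : ℕ → ℝ :=
  fun k => (1 / (2 * v (2 * k)) + 1 / (2 * v (2 * k + 1)))⁻¹ + p 1

/-- The isometry `U_e : ℓ²(B_n) → ℓ²(B_{n+1})`, `U_e δ_k = (δ_{2k} + δ_{2k+1})/√2`,
as a `2^{n+1} × 2^n` matrix. -/
def Uemat (n : ℕ) : Matrix (Fin (2 ^ (n + 1))) (Fin (2 ^ n)) ℝ :=
  fun j k => if (j : ℕ) = 2 * k then (Real.sqrt 2)⁻¹
    else if (j : ℕ) = 2 * k + 1 then (Real.sqrt 2)⁻¹ else 0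

/-- The isometry `U_f : ℓ²(B_n) → ℓ²(B_{n+1})`, `U_f δ_k = (δ_{2k} - δ_{2k+1})/√2`,
as a `2^{n+1} × 2^n` matrix. -/
def Ufmat (n : ℕ) : Matrix (Fin (2 ^ (n + 1))) (Fin (2 ^ n)) ℝ :=
  fun j k => if (j : ℕ) = 2 * k then (Real.sqrt 2)⁻¹
    else if (j : ℕ) = 2 * k + 1 then -(Real.sqrt 2)⁻¹ else 0

/-- The unitary `U = U_e ⊕ U_f : ℓ²(B_n) ⊕ ℓ²(B_n) → ℓ²(B_{n+1})`. -/
def Umat (n : ℕ) : Matrix (Fin (2 ^ (n + 1))) (Fin (2 ^ n) ⊕ Fin (2 ^ n)) ℝ :=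
  Matrix.fromCols (Uemat n) (Ufmat n)

/-- `V_ff = V_ee`: multiplication by `(V_{2k} + V_{2k+1})/2` on `ℓ²(B_n)`. -/
def Vffmat (v : ℕ → ℝ) (n : ℕ) : Matrix (Fin (2 ^ n)) (Fin (2 ^ n)) ℝ :=
  Matrix.diagonal fun k => (v (2 * k) + v (2 * k + 1)) / 2

/-- `V_fe = V_ef`: multiplication by `(V_{2k} - V_{2k+1})/2` on `ℓ²(B_n)`. -/
def Vfemat (v : ℕ → ℝ) (n : ℕ) : Matrix (Fin (2 ^ n)) (Fin (2 ^ n)) ℝ :=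
  Matrix.diagonal fun k => (v (2 * k) - v (2 * k + 1)) / 2

/-- The operator `S = U_e^* - V_fe V_ff^{-1} U_f^* : ℓ²(B_{n+1}) → ℓ²(B_n)`. -/
def Smat (v : ℕ → ℝ) (n : ℕ) : Matrix (Fin (2 ^ n)) (Fin (2 ^ (n + 1))) ℝ :=
  (Uemat n)ᵀ - Vfemat v n * (Vffmat v n)⁻¹ * (Ufmat n)ᵀ

/-- The maximally delocalized vector `φ_n = 2^{-n/2} 1_{B_n}`. -/
def phiVec (n : ℕ) : Fin (2 ^ n) → ℝ := fun _ => (Real.sqrt (2 ^ n))⁻¹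

end

/-!
In the basis `e_k, f_k` the hierarchical Laplacian only sees the `e`-block: its entry at the
sites `2j + a, 2k + b` is `(RΔ_{jk} + p₁ δ_{jk}) / 2`, independently of `a, b`. Hence
`U* H U = [[RΔ + p₁ + V_ee, V_ef], [V_fe, V_ff]]`, and since `V_ee - V_fe V_ff⁻¹ V_ef` is the
harmonic-mean term of `RV`, the upper-left block is `RH + V_fe V_ff⁻¹ V_fe`, so `RH` is its Schur
complement with respect to `V_ff`. The claimed formula is the block `LDU` inverse, and inversion
commutes with conjugation by the unitary `U`.
-/

namespace Matrix

variable {m n α : Type*} [Fintype m] [DecidableEq m] [Fintype n] [DecidableEq n] [CommRing α]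

lemma inv_mul_mul_of_mul_eq_one {A : Matrix m n α} {B : Matrix n m α} (hAB : A * B = 1)
    (hBA : B * A = 1) (M : Matrix m m α) : (B * M * A)⁻¹ = B * M⁻¹ * A := by
  by_cases hM : IsUnit M.det
  · refine inv_eq_left_inv ?_
    calc B * M⁻¹ * A * (B * M * A) = B * (M⁻¹ * (A * B) * M) * A := by
          simp only [Matrix.mul_assoc]
      _ = 1 := by rw [hAB, Matrix.mul_one, nonsing_inv_mul _ hM, Matrix.mul_one, hBA]
  · have hBMA : ¬IsUnit (B * M * A).det := fun h => hM <| isUnit_det_of_right_inverse <|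
      calc M * (A * (B * M * A)⁻¹ * B) = A * B * M * (A * (B * M * A)⁻¹ * B) := by
            rw [hAB, Matrix.one_mul]
        _ = A * (B * M * A * (B * M * A)⁻¹) * B := by simp only [Matrix.mul_assoc]
        _ = 1 := by rw [mul_nonsing_inv _ h, Matrix.mul_one, hAB]
    rw [nonsing_inv_apply_not_isUnit _ hM, nonsing_inv_apply_not_isUnit _ hBMA,
      Matrix.mul_zero, Matrix.zero_mul]

lemma inv_fromBlocks_add_mul_inv_mul {S : Matrix m m α} {W : Matrix n n α} (hS : IsUnit S.det)
    (hW : IsUnit W.det) (B : Matrix m n α) (C : Matrix n m α) :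
    (fromBlocks (S + B * W⁻¹ * C) B C W)⁻¹ =
      fromBlocks 1 0 (-(W⁻¹ * C)) 1 * fromBlocks S⁻¹ 0 0 W⁻¹ * fromBlocks 1 (-(B * W⁻¹)) 0 1 := by
  refine inv_eq_left_inv ?_
  simp only [fromBlocks_multiply, Matrix.mul_add, Matrix.add_mul, Matrix.mul_neg, Matrix.neg_mul,
    Matrix.mul_one, Matrix.one_mul, Matrix.mul_zero, Matrix.zero_mul, add_zero, zero_add,
    Matrix.mul_assoc, nonsing_inv_mul _ hS, nonsing_inv_mul _ hW, ← fromBlocks_one]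
  congr 1 <;> abel

end Matrix

lemma div_two_pow_eq_div_two_pow_of_le {j k m r : ℕ} (hmr : m ≤ r)
    (h : j / 2 ^ m = k / 2 ^ m) : j / 2 ^ r = k / 2 ^ r := by
  obtain ⟨s, rfl⟩ := Nat.exists_eq_add_of_le hmr
  rw [pow_add, ← Nat.div_div_eq_div_mul, ← Nat.div_div_eq_div_mul, h]

lemma hdist_le_iff {j k r : ℕ} : hdist j k ≤ r ↔ j / 2 ^ r = k / 2 ^ r := by
  have hne : {r | j / 2 ^ r = k / 2 ^ r}.Nonempty :=
    ⟨j + k, by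
      show j / 2 ^ (j + k) = k / 2 ^ (j + k)
      rw [Nat.div_eq_of_lt, Nat.div_eq_of_lt] <;>
        exact (Nat.lt_two_pow_self).trans_le (Nat.pow_le_pow_right two_pos (by omega))⟩
  exact ⟨fun h => div_two_pow_eq_div_two_pow_of_le h (Nat.sInf_mem hne), fun h => Nat.sInf_le h⟩

lemma lapEntry_eq_tsum (p : ℕ → ℝ) (j k : ℕ) :
    lapEntry p j k = ∑' r, if 1 ≤ r ∧ j / 2 ^ r = k / 2 ^ r then p r / 2 ^ r else 0 := by
  simp only [lapEntry, hdist_le_iff]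

lemma summable_ite_div_two_pow {p : ℕ → ℝ} (hp : Summable p) (P : ℕ → Prop) [DecidablePred P] :
    Summable fun r => if P r then p r / 2 ^ r else 0 := by
  refine Summable.of_norm_bounded hp.abs fun r => ?_
  split_ifs
  · rw [norm_div, norm_pow, Real.norm_two, Real.norm_eq_abs]
    exact div_le_self (abs_nonneg _) (one_le_pow₀ one_le_two)
  · simp

lemma lapEntry_eq_lapEntry_shiftSeq {p : ℕ → ℝ} (hp : Summable p) (j k : ℕ) :
    lapEntry p j k
      = (lapEntry (shiftSeq p) (j / 2) (k / 2) + if j / 2 = k / 2 then p 1 else 0) / 2 := by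
  have hp' : Summable (shiftSeq p) := hp.comp_injective (add_left_injective 1)
  have hterm : ∀ r, (if 1 ≤ r + 1 ∧ j / 2 ^ (r + 1) = k / 2 ^ (r + 1)
      then p (r + 1) / 2 ^ (r + 1) else 0)
        = (if j / 2 / 2 ^ r = k / 2 / 2 ^ r then shiftSeq p r / 2 ^ r else 0) / 2 := fun r => by
    rw [pow_succ', ← Nat.div_div_eq_div_mul, ← Nat.div_div_eq_div_mul, pow_succ, shiftSeq]
    split_ifs <;> simp_all [div_div]
  rw [lapEntry_eq_tsum, lapEntry_eq_tsum, (summable_ite_div_two_pow hp _).tsum_eq_zero_add,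
    tsum_congr hterm, tsum_div_const, (summable_ite_div_two_pow hp' _).tsum_eq_zero_add,
    (summable_ite_div_two_pow hp' _).tsum_eq_zero_add]
  simp [shiftSeq, add_comm]

section Doubling

variable {n : ℕ}

@[simp] lemma dblFin_inj {j k : Fin (2 ^ n)} : dblFin j = dblFin k ↔ j = k := by
  simp [dblFin, Fin.ext_iff]

@[simp] lemma dblFin1_inj {j k : Fin (2 ^ n)} : dblFin1 j = dblFin1 k ↔ j = k := by
  simp [dblFin1, Fin.ext_iff]

@[simp] lemma dblFin_ne_dblFin1 (j k : Fin (2 ^ n)) : dblFin j ≠ dblFin1 k := by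
  simp only [dblFin, dblFin1, ne_eq, Fin.ext_iff]; omega

@[simp] lemma dblFin1_ne_dblFin (j k : Fin (2 ^ n)) : dblFin1 j ≠ dblFin k :=
  (dblFin_ne_dblFin1 k j).symm

end Doubling

section Hamiltonian

variable {p v : ℕ → ℝ} {n : ℕ}

lemma Hmat_succ_apply (hp : Summable p) (l l' : Fin (2 ^ (n + 1))) :
    Hmat p v (n + 1) l l' = (lapEntry (shiftSeq p) (l / 2) (l' / 2)
      + if (l : ℕ) / 2 = l' / 2 then p 1 else 0) / 2 + if l = l' then v l else 0 := by
  rw [Hmat, lapEntry_eq_lapEntry_shiftSeq hp]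

lemma Hmat_dblFin_dblFin (hp : Summable p) (j k : Fin (2 ^ n)) :
    Hmat p v (n + 1) (dblFin j) (dblFin k)
    = (lapEntry (shiftSeq p) j k + if j = k then p 1 else 0) / 2
      + if j = k then v (2 * j) else 0 := by
  simp [Hmat_succ_apply hp, dblFin, Fin.ext_iff]

lemma Hmat_dblFin_dblFin1 (hp : Summable p) (j k : Fin (2 ^ n)) :
    Hmat p v (n + 1) (dblFin j) (dblFin1 k)
    = (lapEntry (shiftSeq p) j k + if j = k then p 1 else 0) / 2 := by
  simp [Hmat_succ_apply hp, dblFin, dblFin1, Fin.ext_iff, Nat.mul_add_div]; omega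

lemma Hmat_dblFin1_dblFin (hp : Summable p) (j k : Fin (2 ^ n)) :
    Hmat p v (n + 1) (dblFin1 j) (dblFin k)
    = (lapEntry (shiftSeq p) j k + if j = k then p 1 else 0) / 2 := by
  simp [Hmat_succ_apply hp, dblFin, dblFin1, Fin.ext_iff, Nat.mul_add_div]; omega

lemma Hmat_dblFin1_dblFin1 (hp : Summable p) (j k : Fin (2 ^ n)) :
    Hmat p v (n + 1) (dblFin1 j) (dblFin1 k)
    = (lapEntry (shiftSeq p) j k + if j = k then p 1 else 0) / 2
      + if j = k then v (2 * j + 1) else 0 := by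
  simp [Hmat_succ_apply hp, dblFin1, Fin.ext_iff, Nat.mul_add_div]

end Hamiltonian

section HaarBasis

variable {n : ℕ}

noncomputable def pairMat (n : ℕ) (σ : ℝ) : Matrix (Fin (2 ^ (n + 1))) (Fin (2 ^ n)) ℝ :=
  fun l k => (√2)⁻¹ * ((if l = dblFin k then 1 else 0) + σ * if l = dblFin1 k then 1 else 0)

lemma Uemat_eq_pairMat : Uemat n = pairMat n 1 := by
  ext l k
  simp only [Uemat, pairMat, Fin.ext_iff, dblFin, dblFin1]
  split_ifs <;> first | omega | simp

lemma Ufmat_eq_pairMat : Ufmat n = pairMat n (-1) := by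
  ext l k
  simp only [Ufmat, pairMat, Fin.ext_iff, dblFin, dblFin1]
  split_ifs <;> first | omega | simp

lemma mul_pairMat_apply {α : Type*} (M : Matrix α (Fin (2 ^ (n + 1))) ℝ) (σ : ℝ) (i : α)
    (k : Fin (2 ^ n)) :
    (M * pairMat n σ) i k = (√2)⁻¹ * (M i (dblFin k) + σ * M i (dblFin1 k)) := by
  simp [Matrix.mul_apply, pairMat, mul_add, Finset.sum_add_distrib]
  ring

lemma transpose_pairMat_mul_apply {α : Type*} (M : Matrix (Fin (2 ^ (n + 1))) α ℝ) (σ : ℝ)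
    (j : Fin (2 ^ n)) (i : α) :
    ((pairMat n σ)ᵀ * M) j i = (√2)⁻¹ * (M (dblFin j) i + σ * M (dblFin1 j) i) := by
  rw [← Matrix.transpose_apply (_ * M), Matrix.transpose_mul, Matrix.transpose_transpose,
    mul_pairMat_apply]
  rfl

lemma transpose_pairMat_mul_mul_pairMat_apply
    (M : Matrix (Fin (2 ^ (n + 1))) (Fin (2 ^ (n + 1))) ℝ) (σ τ : ℝ) (j k : Fin (2 ^ n)) :
    ((pairMat n σ)ᵀ * M * pairMat n τ) j k
      = (M (dblFin j) (dblFin k) + τ * M (dblFin j) (dblFin1 k)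
        + σ * M (dblFin1 j) (dblFin k) + σ * τ * M (dblFin1 j) (dblFin1 k)) / 2 := by
  have hsqrt : (√2)⁻¹ * (√2)⁻¹ = (1 / 2 : ℝ) := by
    rw [← mul_inv, Real.mul_self_sqrt zero_le_two, one_div]
  simp only [mul_pairMat_apply, transpose_pairMat_mul_apply]
  linear_combination (M (dblFin j) (dblFin k) + τ * M (dblFin j) (dblFin1 k)
        + σ * M (dblFin1 j) (dblFin k) + σ * τ * M (dblFin1 j) (dblFin1 k)) * hsqrt

lemma transpose_pairMat_mul_pairMat (σ τ : ℝ) :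
    (pairMat n σ)ᵀ * pairMat n τ
      = ((1 + σ * τ) / 2) • (1 : Matrix (Fin (2 ^ n)) (Fin (2 ^ n)) ℝ) := by
  ext j k
  rw [← Matrix.mul_one (pairMat n σ)ᵀ, transpose_pairMat_mul_mul_pairMat_apply]
  by_cases h : j = k <;> simp [h, Matrix.one_apply]

end HaarBasis

lemma conjTranspose_Umat_mul_mul_Umat {n : ℕ}
    (M : Matrix (Fin (2 ^ (n + 1))) (Fin (2 ^ (n + 1))) ℝ) :
    (Umat n)ᴴ * M * Umat n = Matrix.fromBlocks ((Uemat n)ᵀ * M * Uemat n)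
      ((Uemat n)ᵀ * M * Ufmat n) ((Ufmat n)ᵀ * M * Uemat n) ((Ufmat n)ᵀ * M * Ufmat n) := by
  rw [Umat, Matrix.conjTranspose_fromCols_eq_fromRows_conjTranspose,
    Matrix.conjTranspose_eq_transpose_of_trivial, Matrix.conjTranspose_eq_transpose_of_trivial,
    Matrix.fromRows_mul, Matrix.fromRows_mul_fromCols]

lemma conjTranspose_Umat_mul_Umat (n : ℕ) : (Umat n)ᴴ * Umat n = 1 := by
  rw [← Matrix.mul_one (Umat n)ᴴ, conjTranspose_Umat_mul_mul_Umat, Uemat_eq_pairMat,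
    Ufmat_eq_pairMat]
  simp only [Matrix.mul_one, transpose_pairMat_mul_pairMat]
  norm_num

lemma Umat_mul_conjTranspose_Umat (n : ℕ) : Umat n * (Umat n)ᴴ = 1 :=
  (Matrix.mul_eq_one_comm_of_card_eq _ _ _ (by simp [pow_succ, mul_two])).mp
    (conjTranspose_Umat_mul_Umat n)

section Potential

variable {v : ℕ → ℝ} {n : ℕ}

lemma Vffmat_mul_diagonal (hv : ∀ k : ℕ, k < 2 ^ n → v (2 * k) + v (2 * k + 1) ≠ 0) :
    Vffmat v n * Matrix.diagonal (fun k : Fin (2 ^ n) => 2 / (v (2 * k) + v (2 * k + 1))) = 1 := by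
  rw [Vffmat, Matrix.diagonal_mul_diagonal, ← Matrix.diagonal_one]
  congr 1
  ext k
  field_simp [hv k k.isLt]

lemma Vffmat_inv (hv : ∀ k : ℕ, k < 2 ^ n → v (2 * k) + v (2 * k + 1) ≠ 0) :
    (Vffmat v n)⁻¹ = Matrix.diagonal fun k : Fin (2 ^ n) => 2 / (v (2 * k) + v (2 * k + 1)) :=
  Matrix.inv_eq_right_inv (Vffmat_mul_diagonal hv)

lemma isUnit_det_Vffmat (hv : ∀ k : ℕ, k < 2 ^ n → v (2 * k) + v (2 * k + 1) ≠ 0) :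
    IsUnit (Vffmat v n).det :=
  Matrix.isUnit_det_of_right_inverse (Vffmat_mul_diagonal hv)

end Potential

lemma transpose_pairMat_mul_Hmat_mul_pairMat_apply {p v : ℕ → ℝ} (hp : Summable p) {n : ℕ}
    (σ τ : ℝ) (j k : Fin (2 ^ n)) :
    ((pairMat n σ)ᵀ * Hmat p v (n + 1) * pairMat n τ) j k
      = (1 + σ) * (1 + τ) / 4 * (lapEntry (shiftSeq p) j k + if j = k then p 1 else 0)
        + if j = k then (v (2 * j) + σ * τ * v (2 * j + 1)) / 2 else 0 := by
  rw [transpose_pairMat_mul_mul_pairMat_apply, Hmat_dblFin_dblFin hp, Hmat_dblFin_dblFin1 hp,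
    Hmat_dblFin1_dblFin hp, Hmat_dblFin1_dblFin1 hp]
  split_ifs <;> ring

lemma conjTranspose_Umat_mul_Hmat_mul_Umat {p v : ℕ → ℝ} (hp : Summable p) {n : ℕ}
    (hv : ∀ k : ℕ, k < 2 ^ n → v (2 * k) + v (2 * k + 1) ≠ 0) :
    (Umat n)ᴴ * Hmat p v (n + 1) * Umat n =
      Matrix.fromBlocks
        (Hmat (shiftSeq p) (renPotM p v) n + Vfemat v n * (Vffmat v n)⁻¹ * Vfemat v n)
        (Vfemat v n) (Vfemat v n) (Vffmat v n) := by
  rw [conjTranspose_Umat_mul_mul_Umat, Uemat_eq_pairMat, Ufmat_eq_pairMat, Vffmat_inv hv]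
  congr 1 <;> ext j k <;>
    simp only [transpose_pairMat_mul_Hmat_mul_pairMat_apply hp, Matrix.add_apply, Hmat, Vfemat,
      Vffmat, renPotM, Matrix.diagonal_mul_diagonal, Matrix.diagonal_apply]
  · split_ifs with hjk
    · subst hjk
      have hsum := hv j j.isLt
      field_simp
      ring
    · ring
  all_goals split_ifs <;> ring

theorem schur_block_decomposition_general (n : ℕ) (p : ℕ → ℝ) (hps : Summable p) (v : ℕ → ℝ)
    (hv : ∀ k : ℕ, k < 2 ^ n → v (2 * k) + v (2 * k + 1) ≠ 0)
    (hRH : IsUnit (Hmat (shiftSeq p) (renPotM p v) n).det) :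
    (Umat n)ᴴ * (Hmat p v (n + 1))⁻¹ * Umat n =
      Matrix.fromBlocks 1 0 (-((Vffmat v n)⁻¹ * Vfemat v n)) 1 *
        Matrix.fromBlocks (Hmat (shiftSeq p) (renPotM p v) n)⁻¹ 0 0 (Vffmat v n)⁻¹ *
        Matrix.fromBlocks 1 (-(Vfemat v n * (Vffmat v n)⁻¹)) 0 1 := by
  rw [← Matrix.inv_mul_mul_of_mul_eq_one (Umat_mul_conjTranspose_Umat n)
    (conjTranspose_Umat_mul_Umat n), conjTranspose_Umat_mul_Hmat_mul_Umat hps hv]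
  exact Matrix.inv_fromBlocks_add_mul_inv_mul hRH (isUnit_det_Vffmat hv) _ _

/-- **Schur complement block decomposition** (Proposition in Section 3): for `n ≥ 1`
(written `n+1` here), if `V_{2k} + V_{2k+1} ≠ 0` for all `k`, and `H_{n+1}` and `(RH)_n`
are invertible, then
`U* H_{n+1}^{-1} U = [[1,0],[-V_ff⁻¹ V_ef,1]] · [[(RH)_n⁻¹,0],[0,V_ff⁻¹]] · [[1,-V_fe V_ff⁻¹],[0,1]]`. -/
theorem schur_block_decomposition (n : ℕ) (p : ℕ → ℝ) (hps : Summable p) (v : ℕ → ℝ)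
    (hv : ∀ k : ℕ, k < 2 ^ n → v (2 * k) + v (2 * k + 1) ≠ 0)
    (hH : IsUnit (Hmat p v (n + 1)).det)
    (hRH : IsUnit (Hmat (shiftSeq p) (renPotM p v) n).det) :
    (Umat n)ᴴ * (Hmat p v (n + 1))⁻¹ * Umat n =
      Matrix.fromBlocks 1 0 (-((Vffmat v n)⁻¹ * Vfemat v n)) 1 *
        Matrix.fromBlocks (Hmat (shiftSeq p) (renPotM p v) n)⁻¹ 0 0 (Vffmat v n)⁻¹ *
        Matrix.fromBlocks 1 (-(Vfemat v n * (Vffmat v n)⁻¹)) 0 1 :=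
  schur_block_decomposition_general n p hps v hv hRH
end

section
/- For every n ≥ 1, almost surely the vector φ_n = 2^{−n/2} 1_{B_n} is cyclic for H_{n,n−1}, i.e., the linear span of {(H_{n,n−1})^j φ_n : j = 0, 1, 2, …} equals ℓ²(B_n). -/
open MeasureTheory ProbabilityTheory Matrix Filter Topology

/-!
The Krylov determinant `det [φ, Hφ, …, H^(N-1) φ]` of `H = A + diag v` is a polynomial in the
potential values `v`. It is not the zero polynomial: along the line `v k = k t` its coefficient of
`t^(0 + 1 + ⋯ + (N-1))` is `det (diag φ * vandermonde (0, …, N-1)) ≠ 0`. The zero set of a nonzero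
polynomial is null for every product of atomless measures (Fubini and induction on the number of
variables), and by independence the law of `(V 0, …, V (N-1))` is such a product, each `V k` having
a density. Off that null set the Krylov vectors span.
-/

namespace Polynomial

theorem coeff_prod_sum_of_natDegree_le {R ι : Type*} [CommSemiring R] (s : Finset ι)
    (f : ι → R[X]) (d : ι → ℕ) (h : ∀ i ∈ s, (f i).natDegree ≤ d i) :
    (∏ i ∈ s, f i).coeff (∑ i ∈ s, d i) = ∏ i ∈ s, (f i).coeff (d i) := by
  classical
  induction s using Finset.induction_on with
  | empty => simp
  | insert a s ha ih =>
    rw [Finset.prod_insert ha, Finset.sum_insert ha, Finset.prod_insert ha,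
      coeff_mul_add_eq_of_natDegree_le (h a (Finset.mem_insert_self a s))
        ((natDegree_prod_le s f).trans
          (Finset.sum_le_sum fun i hi => h i (Finset.mem_insert_of_mem hi))),
      ih fun i hi => h i (Finset.mem_insert_of_mem hi)]

end Polynomial

namespace MvPolynomial

theorem ae_eval_ne_zero : ∀ {N : ℕ} (μ : Fin N → Measure ℝ) [∀ i, SigmaFinite (μ i)]
    [∀ i, NullSingletonClass (μ i)] {Q : MvPolynomial (Fin N) ℝ}, Q ≠ 0 →
    ∀ᵐ x ∂Measure.pi μ, eval x Q ≠ 0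
  | 0, _, _, _, Q, hQ => Eventually.of_forall fun x hx =>
      hQ (MvPolynomial.funext fun y => by rw [Subsingleton.elim y x, hx, map_zero])
  | N + 1, μ, _, _, Q, hQ => by
    set P := finSuccEquiv ℝ N Q
    have hP : P ≠ 0 := (AddEquivClass.map_ne_zero_iff).mpr hQ
    have hlead : ∀ᵐ s ∂Measure.pi fun j => μ (Fin.succAbove 0 j), eval s P.leadingCoeff ≠ 0 :=
      ae_eval_ne_zero _ (Polynomial.leadingCoeff_ne_zero.mpr hP)
    -- Where the leading coefficient in the first variable survives, the fibre is a root set.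
    have hfiber : ∀ᵐ s ∂Measure.pi fun j => μ (Fin.succAbove 0 j), ∀ᵐ y ∂μ 0,
        eval (Fin.cons y s) Q ≠ 0 := by
      filter_upwards [hlead] with s hs
      have hPs : P.map (eval s) ≠ 0 := fun h => hs <| by
        simpa using congr_arg (Polynomial.coeff · P.natDegree) h
      filter_upwards [(Polynomial.finite_setOfPred_isRoot hPs).countable.ae_notMem (μ 0)] with y hy
      rwa [eval_eq_eval_mv_eval']
    have hmeas : MeasurableSet {q : ℝ × (Fin N → ℝ) | eval (Fin.cons q.1 q.2) Q ≠ 0} :=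
      (measurableSet_singleton 0).compl.preimage ((continuous_eval Q).comp
        (by fun_prop)).measurable
    have hprod := (Measure.ae_prod_iff_ae_ae hmeas).mpr ((Measure.ae_ae_comm hmeas).mpr hfiber)
    filter_upwards [(measurePreserving_piFinSuccAbove μ 0).quasiMeasurePreserving.ae hprod] with x hx
    simpa [MeasurableEquiv.piFinSuccAbove_apply, Fin.insertNthEquiv] using hx

end MvPolynomial

section Krylov

variable {N : ℕ}

def krylovMatrix {R : Type*} [Semiring R] (A : Matrix (Fin N) (Fin N) R) (φ : Fin N → R) :
    Matrix (Fin N) (Fin N) R :=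
  Matrix.of fun i j => (A ^ (j : ℕ) *ᵥ φ) i

@[simp]
theorem krylovMatrix_apply {R : Type*} [Semiring R] (A : Matrix (Fin N) (Fin N) R)
    (φ : Fin N → R) (i j : Fin N) : krylovMatrix A φ i j = (A ^ (j : ℕ) *ᵥ φ) i :=
  rfl

theorem RingHom.map_krylovMatrix {R S : Type*} [CommRing R] [CommRing S] (f : R →+* S)
    (A : Matrix (Fin N) (Fin N) R) (φ : Fin N → R) :
    (krylovMatrix A φ).map f = krylovMatrix (A.map f) (f ∘ φ) := by
  ext i j
  simp only [krylovMatrix_apply, map_apply, f.map_mulVec, Matrix.map_pow]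

theorem span_krylov_eq_top_of_det_ne_zero {K : Type*} [Field K] (A : Matrix (Fin N) (Fin N) K)
    (φ : Fin N → K) (h : (krylovMatrix A φ).det ≠ 0) :
    Submodule.span K (Set.range fun j : ℕ => (A ^ j) *ᵥ φ) = ⊤ := by
  have hsurj : LinearMap.range (krylovMatrix A φ).mulVecLin = ⊤ :=
    LinearMap.range_eq_top.mpr <| mulVec_surjective_iff_isUnit.mpr <|
      (isUnit_iff_isUnit_det _).mpr h.isUnit
  rw [range_mulVecLin] at hsurj
  refine top_unique (hsurj ▸ Submodule.span_mono ?_)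
  rintro _ ⟨j, rfl⟩
  exact ⟨j, rfl⟩

end Krylov

section Pencil

open Polynomial

variable {K : Type*} [Field K] {N : ℕ} (A : Matrix (Fin N) (Fin N) K) (w : Fin N → K)

noncomputable def diagonalPencil : Matrix (Fin N) (Fin N) K[X] :=
  A.map C + diagonal fun i => C (w i) * X

theorem diagonalPencil_mulVec_natDegree_coeff {u : Fin N → K[X]} {d : ℕ}
    (hu : ∀ k, (u k).natDegree ≤ d) (i : Fin N) :
    ((diagonalPencil A w *ᵥ u) i).natDegree ≤ d + 1 ∧
      ((diagonalPencil A w *ᵥ u) i).coeff (d + 1) = w i * (u i).coeff d := by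
  have hsplit : (diagonalPencil A w *ᵥ u) i = ∑ k, C (A i k) * u k + C (w i) * (X * u i) := by
    rw [diagonalPencil, add_mulVec, Pi.add_apply, mulVec_diagonal, mul_assoc]
    simp [mulVec, dotProduct]
  have hsum : (∑ k, C (A i k) * u k).natDegree ≤ d :=
    natDegree_sum_le_of_forall_le _ _ fun k _ => natDegree_C_mul_le _ _ |>.trans (hu k)
  rw [hsplit]
  constructor
  · refine natDegree_add_le_of_degree_le (hsum.trans d.le_succ) ?_
    refine (natDegree_C_mul_le _ _).trans <| natDegree_mul_le.trans ?_
    have := hu i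
    have := natDegree_X_le (R := K)
    omega
  · rw [coeff_add, coeff_eq_zero_of_natDegree_lt (hsum.trans_lt d.lt_succ_self), zero_add,
      coeff_C_mul, coeff_X_mul]

theorem diagonalPencil_pow_mulVec_natDegree_coeff (φ : Fin N → K) (j : ℕ) (i : Fin N) :
    ((diagonalPencil A w ^ j *ᵥ (C ∘ φ)) i).natDegree ≤ j ∧
      ((diagonalPencil A w ^ j *ᵥ (C ∘ φ)) i).coeff j = w i ^ j * φ i := by
  induction j generalizing i with
  | zero => simp
  | succ j ih =>
    rw [pow_succ', ← mulVec_mulVec, (diagonalPencil_mulVec_natDegree_coeff A w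
      (fun k => (ih k).1) i).2, (ih i).2, pow_succ', mul_assoc]
    exact ⟨(diagonalPencil_mulVec_natDegree_coeff A w (fun k => (ih k).1) i).1, rfl⟩

theorem coeff_det_krylovMatrix_diagonalPencil (φ : Fin N → K) :
    (krylovMatrix (diagonalPencil A w) (C ∘ φ)).det.coeff (∑ j : Fin N, (j : ℕ)) =
      (diagonal φ * vandermonde w).det := by
  rw [det_apply, det_apply, finsetSum_coeff]
  refine Finset.sum_congr rfl fun σ _ => ?_
  rw [coeff_smul]
  simp only [krylovMatrix_apply]
  rw [coeff_prod_sum_of_natDegree_le _ _ (fun j : Fin N => (j : ℕ))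
    fun j _ => (diagonalPencil_pow_mulVec_natDegree_coeff A w φ (j : ℕ) (σ j)).1]
  congr 1
  refine Finset.prod_congr rfl fun j _ => ?_
  rw [diagonal_mul, vandermonde_apply, mul_comm]
  exact (diagonalPencil_pow_mulVec_natDegree_coeff A w φ (j : ℕ) (σ j)).2

theorem det_krylovMatrix_diagonalPencil_ne_zero {w : Fin N → K} (hw : Function.Injective w)
    {φ : Fin N → K} (hφ : ∀ i, φ i ≠ 0) :
    (krylovMatrix (diagonalPencil A w) (C ∘ φ)).det ≠ 0 := by
  intro h
  have hcoeff := coeff_det_krylovMatrix_diagonalPencil A w φ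
  rw [h, coeff_zero, det_mul, det_diagonal] at hcoeff
  exact mul_ne_zero (Finset.prod_ne_zero_iff.mpr fun i _ => hφ i)
    (det_vandermonde_ne_zero_iff.mpr hw) hcoeff.symm

end Pencil

section GenericPotential

variable {N : ℕ} (A : Matrix (Fin N) (Fin N) ℝ) (φ : Fin N → ℝ)

noncomputable def krylovDetPoly : MvPolynomial (Fin N) ℝ :=
  (krylovMatrix (A.map MvPolynomial.C + diagonal MvPolynomial.X) (MvPolynomial.C ∘ φ)).det

theorem map_krylovDetPoly {S : Type*} [CommRing S] (f : MvPolynomial (Fin N) ℝ →+* S) :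
    f (krylovDetPoly A φ) =
      (krylovMatrix (A.map (f ∘ MvPolynomial.C) + diagonal (f ∘ MvPolynomial.X))
        (f ∘ MvPolynomial.C ∘ φ)).det := by
  rw [krylovDetPoly, f.map_det, RingHom.mapMatrix_apply, f.map_krylovMatrix,
    Matrix.map_add f (map_add f), Matrix.map_map, diagonal_map (map_zero f)]
  rfl

theorem eval_krylovDetPoly (v : Fin N → ℝ) :
    MvPolynomial.eval v (krylovDetPoly A φ) = (krylovMatrix (A + diagonal v) φ).det := by
  rw [map_krylovDetPoly]
  simp [Function.comp_def]

theorem krylovDetPoly_ne_zero (hφ : ∀ i, φ i ≠ 0) : krylovDetPoly A φ ≠ 0 := by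
  set ψ := MvPolynomial.eval₂Hom Polynomial.C fun i : Fin N =>
    Polynomial.C ((i : ℕ) : ℝ) * Polynomial.X
  have hψ : ψ (krylovDetPoly A φ) =
      (krylovMatrix (diagonalPencil A fun i => ((i : ℕ) : ℝ)) (Polynomial.C ∘ φ)).det := by
    rw [map_krylovDetPoly]
    simp [ψ, diagonalPencil, Function.comp_def]
  intro h
  refine det_krylovMatrix_diagonalPencil_ne_zero A (w := fun i : Fin N => ((i : ℕ) : ℝ))
    (fun i j hij => Fin.ext (Nat.cast_injective hij)) hφ ?_
  rw [← hψ, h, map_zero]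

theorem ae_span_krylov_eq_top (μ : Fin N → Measure ℝ) [∀ i, SigmaFinite (μ i)]
    [∀ i, NullSingletonClass (μ i)] (hφ : ∀ i, φ i ≠ 0) :
    ∀ᵐ v ∂Measure.pi μ,
      Submodule.span ℝ (Set.range fun j : ℕ => (A + diagonal v) ^ j *ᵥ φ) = ⊤ := by
  filter_upwards [MvPolynomial.ae_eval_ne_zero μ (krylovDetPoly_ne_zero A φ hφ)] with v hv
  exact span_krylov_eq_top_of_det_ne_zero _ _ (eval_krylovDetPoly A φ v ▸ hv)

end GenericPotential

theorem HmatT_eq_add_diagonal (p v : ℕ → ℝ) (n m : ℕ) :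
    HmatT p v n m = Matrix.of (fun j k : Fin (2 ^ n) => lapEntryT p m j k) +
      diagonal fun k : Fin (2 ^ n) => v k := by
  ext j k
  by_cases h : j = k <;> simp [HmatT, diagonal, h]

theorem phiVec_ne_zero (n : ℕ) (i : Fin (2 ^ n)) : phiVec n i ≠ 0 := by
  simp [phiVec]

theorem phi_cyclic_general
    {Ω : Type*} [MeasurableSpace Ω] (Pr : Measure Ω) [IsProbabilityMeasure Pr]
    (p : ℕ → ℝ)
    (V : ℕ → Ω → ℝ) (hVmeas : ∀ k, Measurable (V k))
    (hViid : iIndepFun V Pr)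
    (ρ : ℝ → ℝ)
    (hρ : ∀ k, Measure.map (V k) Pr = volume.withDensity fun v => ENNReal.ofReal (ρ v))
    (n : ℕ) :
    ∀ᵐ ω ∂Pr,
      Submodule.span ℝ
        (Set.range fun j : ℕ =>
          ((HmatT p (fun i => V i ω) (n + 1) n) ^ j).mulVec (phiVec (n + 1))) = ⊤ := by
  set W : Ω → Fin (2 ^ (n + 1)) → ℝ := fun ω i => V i ω
  have hlaw : Pr.map W = Measure.pi fun i : Fin (2 ^ (n + 1)) => Pr.map (V i) :=
    (hViid.precomp Fin.val_injective).map_fun_eq_pi_map fun i => (hVmeas i).aemeasurable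
  have (k : ℕ) : IsProbabilityMeasure (Pr.map (V k)) :=
    Measure.isProbabilityMeasure_map (hVmeas k).aemeasurable
  have (k : ℕ) : NullSingletonClass (Pr.map (V k)) := by
    rw [hρ]
    infer_instance
  have hW := ae_span_krylov_eq_top (Matrix.of fun j k : Fin (2 ^ (n + 1)) => lapEntryT p n j k)
    (phiVec (n + 1)) (fun i => Pr.map (V i)) (phiVec_ne_zero _)
  rw [← hlaw] at hW
  filter_upwards [ae_of_ae_map (measurable_pi_lambda W fun i => hVmeas i).aemeasurable hW]
    with ω hω
  rwa [HmatT_eq_add_diagonal]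

/-- **Cyclicity of `φ_n`** (Lemma, part i): for every `n ≥ 1` (written `n+1` here), the
vector `φ_{n+1} = 2^{-(n+1)/2} 1_{B_{n+1}}` is almost surely cyclic for `H_{n+1,n}`. -/
theorem phi_cyclic
    {Ω : Type*} [MeasurableSpace Ω] (Pr : Measure Ω) [IsProbabilityMeasure Pr]
    (p : ℕ → ℝ) (hps : Summable p)
    (V : ℕ → Ω → ℝ) (hVmeas : ∀ k, Measurable (V k))
    (hViid : iIndepFun V Pr)
    (ρ : ℝ → ℝ) (hρpos : ∀ v, 0 ≤ ρ v)
    (hρ : ∀ k, Measure.map (V k) Pr = volume.withDensity fun v => ENNReal.ofReal (ρ v))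
    (hρbd : ∃ M : ℝ, ∀ v, ρ v ≤ M)
    (n : ℕ) :
    ∀ᵐ ω ∂Pr,
      Submodule.span ℝ
        (Set.range fun j : ℕ =>
          ((HmatT p (fun i => V i ω) (n + 1) n) ^ j).mulVec (phiVec (n + 1))) = ⊤ :=
  phi_cyclic_general Pr p V hVmeas hViid ρ hρ n
end

section
/- Let V and W be independent real random variables whose laws have bounded densities ϱ and ϱ̃ in L¹ ∩ L^∞, and let p ∈ ℝ. Then the law of (1/(2V) + 1/(2W))^{−1} + p is absolutely continuous with respect to Lebesgue measure, with a density T_p(ϱ, ϱ̃) satisfying ‖T_p(ϱ, ϱ̃)‖_∞ ≤ ‖ϱ‖_∞ + ‖ϱ̃‖_∞; equivalently, P( (1/(2V) + 1/(2W))^{−1} + p ∈ A ) ≤ (‖ϱ‖_∞ + ‖ϱ̃‖_∞)·|A| for every Borel set A ⊂ ℝ of Lebesgue measure |A|. -/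
open MeasureTheory ProbabilityTheory Matrix Filter Topology

/-! The harmonic mean `H(v, w) = 2vw/(v + w)` has partial derivatives `∂ᵥH = 2w²/(v + w)²` and
`∂_w H = 2v²/(v + w)²`, whose sum is at least `1` since `2(v² + w²) ≥ (v + w)²`. Hence
`1_A(H + p) ≤ 1_A(H + p) ∂ᵥH + 1_A(H + p) ∂_w H`. Integrate the first term against `ϱ(v) ϱ̃(w)`,
in `v` first: bounding `ϱ` by `‖ϱ‖_∞` and substituting `v ↦ H(v, w) + p`, which is injective for
fixed `w ≠ 0`, leaves at most `‖ϱ‖_∞ |A|`. The second term is symmetric and is at most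
`‖ϱ̃‖_∞ |A|`. -/

open scoped ENNReal

noncomputable section

def harmonicMean (v w : ℝ) : ℝ := 2 * v * w / (v + w)

def harmonicMeanDerivLeft (v w : ℝ) : ℝ := 2 * w ^ 2 / (v + w) ^ 2

lemma harmonicMeanDerivLeft_nonneg (v w : ℝ) : 0 ≤ harmonicMeanDerivLeft v w := by
  unfold harmonicMeanDerivLeft
  positivity

lemma harmonicMean_comm (v w : ℝ) : harmonicMean v w = harmonicMean w v := by
  unfold harmonicMean
  rw [add_comm, mul_right_comm]

lemma inv_one_div_add_one_div_eq_harmonicMean {v w : ℝ} (hv : v ≠ 0) (hw : w ≠ 0) :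
    (1 / (2 * v) + 1 / (2 * w))⁻¹ = harmonicMean v w := by
  rw [div_add_div _ _ (by positivity) (by positivity), inv_div, harmonicMean,
    show 1 * (2 * w) + 2 * v * 1 = 2 * (v + w) by ring,
    show 2 * v * (2 * w) = 2 * (2 * v * w) by ring, mul_div_mul_left _ _ two_ne_zero]

@[fun_prop]
lemma measurable_harmonicMean : Measurable fun q : ℝ × ℝ => harmonicMean q.1 q.2 := by
  unfold harmonicMean
  fun_prop

lemma hasDerivAt_harmonicMean_left {v w : ℝ} (h : v + w ≠ 0) :
    HasDerivAt (harmonicMean · w) (harmonicMeanDerivLeft v w) v := by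
  have hnum : HasDerivAt (fun v => 2 * v * w) (2 * w) v := by
    simpa using ((hasDerivAt_id v).const_mul 2).mul_const w
  refine (hnum.div ((hasDerivAt_id v).add_const w) h).congr_deriv ?_
  simp only [harmonicMeanDerivLeft, id]
  ring

lemma injOn_harmonicMean_left {w : ℝ} (hw : w ≠ 0) :
    Set.InjOn (harmonicMean · w) {v | v + w ≠ 0} := by
  intro a ha b hb hab
  have h := (div_eq_div_iff ha hb).mp hab
  have : 2 * w ^ 2 * a = 2 * w ^ 2 * b := by linear_combination h
  exact mul_left_cancel₀ (by positivity) this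

lemma one_le_harmonicMeanDerivLeft_add {v w : ℝ} (h : v + w ≠ 0) :
    1 ≤ harmonicMeanDerivLeft v w + harmonicMeanDerivLeft w v := by
  rw [harmonicMeanDerivLeft, harmonicMeanDerivLeft, add_comm w v, ← add_div,
    le_div_iff₀ (by positivity)]
  nlinarith [sq_nonneg (v - w)]

-- The antidiagonal is excluded: there `harmonicMean` and its derivatives take the junk value `0`.
def harmonicEvent (p : ℝ) (A : Set ℝ) : Set (ℝ × ℝ) :=
  {q | q.1 + q.2 ≠ 0 ∧ harmonicMean q.1 q.2 + p ∈ A}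

lemma measurableSet_harmonicEvent (p : ℝ) {A : Set ℝ} (hA : MeasurableSet A) :
    MeasurableSet (harmonicEvent p A) :=
  (measurableSet_singleton 0).compl.preimage (by fun_prop) |>.inter
    (hA.preimage (by fun_prop))

lemma swap_mem_harmonicEvent {p : ℝ} {A : Set ℝ} {q : ℝ × ℝ} :
    q.swap ∈ harmonicEvent p A ↔ q ∈ harmonicEvent p A := by
  change q.2 + q.1 ≠ 0 ∧ harmonicMean q.2 q.1 + p ∈ A ↔ _
  rw [add_comm, harmonicMean_comm]
  rfl

lemma setLIntegral_harmonicMeanDerivLeft_le (p w : ℝ) {A : Set ℝ} (hA : MeasurableSet A) :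
    ∫⁻ v in {v | (v, w) ∈ harmonicEvent p A}, ENNReal.ofReal (harmonicMeanDerivLeft v w) ≤
      volume A := by
  rcases eq_or_ne w 0 with rfl | hw
  · simp [harmonicMeanDerivLeft]
  set s := {v | (v, w) ∈ harmonicEvent p A}
  have hs : MeasurableSet s := measurableSet_harmonicEvent p hA |>.preimage (by fun_prop)
  have hderiv : ∀ v ∈ s, HasDerivWithinAt (harmonicMean · w + p) (harmonicMeanDerivLeft v w) s v :=
    fun v hv => ((hasDerivAt_harmonicMean_left hv.1).add_const p).hasDerivWithinAt
  have hinj : Set.InjOn (harmonicMean · w + p) s :=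
    fun a ha b hb hab => injOn_harmonicMean_left hw ha.1 hb.1 (add_right_cancel hab)
  calc ∫⁻ v in s, ENNReal.ofReal (harmonicMeanDerivLeft v w)
      = volume ((harmonicMean · w + p) '' s) := by
        rw [← setLIntegral_one, lintegral_image_eq_lintegral_abs_deriv_mul hs hderiv hinj]
        simp only [mul_one, abs_of_nonneg, harmonicMeanDerivLeft_nonneg]
    _ ≤ volume A := measure_mono (Set.image_subset_iff.2 fun v hv => hv.2)

lemma lintegral_prod_indicator_harmonicEvent_le {μ ν : Measure ℝ} [SFinite μ]
    [IsProbabilityMeasure ν] {a : ℝ≥0∞} (hμ : μ ≤ a • volume) (p : ℝ) {A : Set ℝ}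
    (hA : MeasurableSet A) :
    ∫⁻ q, (harmonicEvent p A).indicator
      (fun q => ENNReal.ofReal (harmonicMeanDerivLeft q.1 q.2)) q ∂(μ.prod ν) ≤ a * volume A := by
  set J : ℝ × ℝ → ℝ≥0∞ := fun q => ENNReal.ofReal (harmonicMeanDerivLeft q.1 q.2)
  have hJ : Measurable J := by
    unfold J harmonicMeanDerivLeft
    fun_prop
  rw [lintegral_prod_symm' _ (hJ.indicator (measurableSet_harmonicEvent p hA))]
  refine (lintegral_mono fun w => ?_).trans_eq (by simp : ∫⁻ _, a * volume A ∂ν = a * volume A)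
  have hs : MeasurableSet {v | (v, w) ∈ harmonicEvent p A} :=
    measurableSet_harmonicEvent p hA |>.preimage (by fun_prop)
  calc ∫⁻ v, (harmonicEvent p A).indicator J (v, w) ∂μ
      ≤ ∫⁻ v, (harmonicEvent p A).indicator J (v, w) ∂(a • volume) := lintegral_mono' hμ le_rfl
    _ = a * ∫⁻ v in {v | (v, w) ∈ harmonicEvent p A},
          ENNReal.ofReal (harmonicMeanDerivLeft v w) := by
        rw [lintegral_smul_measure, ← lintegral_indicator hs]
        rfl
    _ ≤ a * volume A := by grw [setLIntegral_harmonicMeanDerivLeft_le p w hA]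

theorem measure_prod_harmonicEvent_le {μ ν : Measure ℝ} [IsProbabilityMeasure μ]
    [IsProbabilityMeasure ν] {a b : ℝ≥0∞} (hμ : μ ≤ a • volume) (hν : ν ≤ b • volume) (p : ℝ)
    {A : Set ℝ} (hA : MeasurableSet A) :
    (μ.prod ν) (harmonicEvent p A) ≤ (a + b) * volume A := by
  set J : ℝ × ℝ → ℝ≥0∞ := fun q => ENNReal.ofReal (harmonicMeanDerivLeft q.1 q.2)
  have hJ : Measurable J := by
    unfold J harmonicMeanDerivLeft
    fun_prop
  have hE := measurableSet_harmonicEvent p hA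
  have hcover (q : ℝ × ℝ) : (harmonicEvent p A).indicator 1 q ≤
      (harmonicEvent p A).indicator J q + (harmonicEvent p A).indicator J q.swap := by
    by_cases hq : q ∈ harmonicEvent p A
    · rw [Set.indicator_of_mem hq, Set.indicator_of_mem hq,
        Set.indicator_of_mem (swap_mem_harmonicEvent.2 hq), Pi.one_apply, ← ENNReal.ofReal_one,
        ← ENNReal.ofReal_add (harmonicMeanDerivLeft_nonneg _ _) (harmonicMeanDerivLeft_nonneg _ _)]
      exact ENNReal.ofReal_le_ofReal (one_le_harmonicMeanDerivLeft_add hq.1)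
    · simp [hq]
  calc (μ.prod ν) (harmonicEvent p A) = ∫⁻ q, (harmonicEvent p A).indicator 1 q ∂(μ.prod ν) :=
        (lintegral_indicator_one hE).symm
    _ ≤ ∫⁻ q, ((harmonicEvent p A).indicator J q + (harmonicEvent p A).indicator J q.swap)
          ∂(μ.prod ν) := lintegral_mono hcover
    _ = ∫⁻ q, (harmonicEvent p A).indicator J q ∂(μ.prod ν) +
          ∫⁻ q, (harmonicEvent p A).indicator J q ∂(ν.prod μ) := by
        rw [lintegral_add_left (hJ.indicator hE), lintegral_prod_swap]
    _ ≤ a * volume A + b * volume A :=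
        add_le_add (lintegral_prod_indicator_harmonicEvent_le hμ p hA)
          (lintegral_prod_indicator_harmonicEvent_le hν p hA)
    _ = (a + b) * volume A := (add_mul _ _ _).symm

lemma ae_prod_ne_zero_and_add_ne_zero (μ ν : Measure ℝ) [SFinite μ] [SFinite ν]
    [NullSingletonClass μ] [NullSingletonClass ν] :
    ∀ᵐ q ∂(μ.prod ν), q.1 ≠ 0 ∧ q.2 ≠ 0 ∧ q.1 + q.2 ≠ 0 := by
  refine (Measure.ae_prod_mem_iff_ae_ae_mem
    (by measurability : MeasurableSet {q : ℝ × ℝ | q.1 ≠ 0 ∧ q.2 ≠ 0 ∧ q.1 + q.2 ≠ 0})).2 ?_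
  filter_upwards [μ.ae_ne 0] with v hv
  filter_upwards [ν.ae_ne 0, ν.ae_ne (-v)] with w hw hvw
  exact ⟨hv, hw, fun h => hvw (eq_neg_of_add_eq_zero_right h)⟩

lemma withDensity_ofReal_le_eLpNorm_top_smul {α : Type*} [MeasurableSpace α] (μ : Measure α)
    (f : α → ℝ) : μ.withDensity (fun x => ENNReal.ofReal (f x)) ≤ eLpNorm f ⊤ μ • μ := by
  rw [← withDensity_const, eLpNorm_exponent_top]
  refine withDensity_mono ?_
  filter_upwards [ae_le_eLpNormEssSup (f := f) (μ := μ)] with x hx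
  exact (Real.ofReal_le_enorm _).trans hx

lemma MeasureTheory.Measure.AbsolutelyContinuous.nullSingletonClass {α : Type*}
    [MeasurableSpace α] {μ ν : Measure α} [NullSingletonClass ν] (h : μ ≪ ν) :
    NullSingletonClass μ :=
  ⟨fun x => h (measure_singleton x)⟩

theorem measure_prod_preimage_inv_one_div_add_one_div_le {μ ν : Measure ℝ}
    [IsProbabilityMeasure μ] [IsProbabilityMeasure ν] {a b : ℝ≥0∞} (hμ : μ ≤ a • volume)
    (hν : ν ≤ b • volume) (p : ℝ) {A : Set ℝ} (hA : MeasurableSet A) :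
    (μ.prod ν) ((fun q : ℝ × ℝ => (1 / (2 * q.1) + 1 / (2 * q.2))⁻¹ + p) ⁻¹' A) ≤
      (a + b) * volume A := by
  have := (Measure.absolutelyContinuous_of_le_smul hμ).nullSingletonClass
  have := (Measure.absolutelyContinuous_of_le_smul hν).nullSingletonClass
  refine le_trans (measure_mono_ae ?_) (measure_prod_harmonicEvent_le hμ hν p hA)
  filter_upwards [ae_prod_ne_zero_and_add_ne_zero μ ν] with q ⟨hv, hw, hvw⟩ hq
  exact ⟨hvw, inv_one_div_add_one_div_eq_harmonicMean hv hw ▸ hq⟩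

end

theorem renormalized_density_bounded_general
    {Ω : Type*} [MeasurableSpace Ω] (Pr : Measure Ω) [IsProbabilityMeasure Pr]
    (Vr Wr : Ω → ℝ) (hV : Measurable Vr) (hW : Measurable Wr)
    (hindep : IndepFun Vr Wr Pr)
    (f g : ℝ → ℝ)
    (hVd : Measure.map Vr Pr = volume.withDensity fun v => ENNReal.ofReal (f v))
    (hWd : Measure.map Wr Pr = volume.withDensity fun v => ENNReal.ofReal (g v))
    (pp : ℝ) :
    Measure.map (fun ω => (1 / (2 * Vr ω) + 1 / (2 * Wr ω))⁻¹ + pp) Pr ≪ volume ∧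
    ∀ A : Set ℝ, MeasurableSet A →
      Pr {ω | (1 / (2 * Vr ω) + 1 / (2 * Wr ω))⁻¹ + pp ∈ A} ≤
        (eLpNorm f ⊤ volume + eLpNorm g ⊤ volume) * volume A := by
  have : IsProbabilityMeasure (Pr.map Vr) := Measure.isProbabilityMeasure_map hV.aemeasurable
  have : IsProbabilityMeasure (Pr.map Wr) := Measure.isProbabilityMeasure_map hW.aemeasurable
  have hbound (A : Set ℝ) (hA : MeasurableSet A) :
      Pr {ω | (1 / (2 * Vr ω) + 1 / (2 * Wr ω))⁻¹ + pp ∈ A} ≤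
        (eLpNorm f ⊤ volume + eLpNorm g ⊤ volume) * volume A := by
    have := measure_prod_preimage_inv_one_div_add_one_div_le
      (hVd ▸ withDensity_ofReal_le_eLpNorm_top_smul _ f)
      (hWd ▸ withDensity_ofReal_le_eLpNorm_top_smul _ g) pp hA
    rwa [← (indepFun_iff_map_prod_eq_prod_map_map hV.aemeasurable hW.aemeasurable).mp hindep,
      Measure.map_apply (hV.prodMk hW) (by measurability)] at this
  refine ⟨Measure.absolutelyContinuous_of_le_smul
    (c := eLpNorm f ⊤ volume + eLpNorm g ⊤ volume) (Measure.le_iff.2 fun A hA => ?_), hbound⟩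
  rw [Measure.map_apply (by fun_prop) hA, Measure.smul_apply, smul_eq_mul]
  exact hbound A hA

/-- **Boundedness of the renormalized density** (Lemma A.1): if `V ~ ϱ` and `W ~ ϱ̃` are
independent with bounded densities, then the law of `(1/(2V) + 1/(2W))⁻¹ + p` is
absolutely continuous with density `T_p(ϱ, ϱ̃)` satisfying
`‖T_p(ϱ, ϱ̃)‖_∞ ≤ ‖ϱ‖_∞ + ‖ϱ̃‖_∞`; equivalently
`P((1/(2V) + 1/(2W))⁻¹ + p ∈ A) ≤ (‖ϱ‖_∞ + ‖ϱ̃‖_∞) |A|` for every Borel set `A`. -/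
theorem renormalized_density_bounded
    {Ω : Type*} [MeasurableSpace Ω] (Pr : Measure Ω) [IsProbabilityMeasure Pr]
    (Vr Wr : Ω → ℝ) (hV : Measurable Vr) (hW : Measurable Wr)
    (hindep : IndepFun Vr Wr Pr)
    (f g : ℝ → ℝ) (hf0 : ∀ v, 0 ≤ f v) (hg0 : ∀ v, 0 ≤ g v)
    (hfi : Integrable f volume) (hgi : Integrable g volume)
    (hfb : ∃ M : ℝ, ∀ v, f v ≤ M) (hgb : ∃ M : ℝ, ∀ v, g v ≤ M)
    (hVd : Measure.map Vr Pr = volume.withDensity fun v => ENNReal.ofReal (f v))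
    (hWd : Measure.map Wr Pr = volume.withDensity fun v => ENNReal.ofReal (g v))
    (pp : ℝ) :
    Measure.map (fun ω => (1 / (2 * Vr ω) + 1 / (2 * Wr ω))⁻¹ + pp) Pr ≪ volume ∧
    ∀ A : Set ℝ, MeasurableSet A →
      Pr {ω | (1 / (2 * Vr ω) + 1 / (2 * Wr ω))⁻¹ + pp ∈ A} ≤
        (eLpNorm f ⊤ volume + eLpNorm g ⊤ volume) * volume A :=
  renormalized_density_bounded_general Pr Vr Wr hV hW hindep f g hVd hWd pp
end
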